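/- arXiv:0706.1072 — 2 statements merged into one kernel-verified Lean document; each statement's English description precedes it below -/
import Mathlib

section
/- Let A be an abelian category equipped with additive functions rk, deg : Ob(A) → ℤ (additive on short exact sequences) such that rk(X) > 0 for every nonzero object X. For a nonzero object V define μ(V) = deg(V)/rk(V) ∈ ℚ, and call V semistable of slope μ if μ(V) = μ and for every nonzero proper subobject F ⊆ V one has μ(F) ≤ μ. Then for any map φ : F → G between semistable objects of the same slope μ, both ker(φ) and coker(φ) are either zero or semistable of slope μ. Consequently, the full subcategory of semistable objects of slope μ (together with the zero object) is an abelian subcategory of A. -/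
/-!
Measure everything against the slope `μ` by the additive excess `deg - μ * rk`. A semistable
object of slope `μ` has excess `0`, its subobjects have excess `≤ 0` and hence its quotients have
excess `≥ 0`. The image of `φ` is a subobject of `G` and a quotient of `F`, so its excess is `0`;
then `ker φ` and `coker φ` have excess `0` by additivity. Subobjects of `ker φ` are subobjects
of `F`, and a subobject `X` of `coker φ` has excess `-(excess of coker φ / X) ≤ 0` because
`coker φ / X` is a quotient of `G`.
-/

open CategoryTheory CategoryTheory.Limits

/-- The objSlope of an object: degree divided by rank, as a rational number. -/
def objSlope {C : Type*} [Category C] (rk deg : C → ℤ) (X : C) : ℚ :=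
  (deg X : ℚ) / (rk X : ℚ)

/-- A nonzero object `V` is semistable of objSlope `μ` if `μ(V) = μ` and every nonzero
proper subobject `F ⊆ V` satisfies `μ(F) ≤ μ`. -/
def Semistable {C : Type*} [Category C] [Abelian C] (rk deg : C → ℤ) (μ : ℚ) (V : C) : Prop :=
  ¬ IsZero V ∧ objSlope rk deg V = μ ∧
    ∀ (F : C) (f : F ⟶ V), Mono f → ¬ IsZero F → ¬ IsIso f → objSlope rk deg F ≤ μ

section Additive

variable {C : Type*} [Category C] [Abelian C] {M : Type*} [AddCommGroup M]

def IsAdditiveOnShortExact (f : C → M) : Prop :=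
  ∀ S : ShortComplex C, S.ShortExact → f S.X₂ = f S.X₁ + f S.X₃

namespace IsAdditiveOnShortExact

variable {f : C → M} (hf : IsAdditiveOnShortExact f)
include hf

lemma eq_add_cokernel {A B : C} (i : A ⟶ B) [Mono i] : f B = f A + f (cokernel i) :=
  hf (ShortComplex.mk i (cokernel.π i) (cokernel.condition i))
    { exact := ShortComplex.exact_of_g_is_cokernel _ (cokernelIsCokernel i) }

lemma eq_kernel_add {A B : C} (p : A ⟶ B) [Epi p] : f A = f (kernel p) + f B :=
  hf (ShortComplex.mk (kernel.ι p) p (kernel.condition p))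
    { exact := ShortComplex.exact_of_f_is_kernel _ (kernelIsKernel p) }

lemma eq_zero_of_isZero {Z : C} (hZ : IsZero Z) : f Z = 0 := by
  have h := hf (ShortComplex.mk (𝟙 Z) (𝟙 Z) (hZ.eq_of_src _ _))
    { exact := ShortComplex.exact_of_isZero_X₂ _ hZ }
  simpa using h

lemma congr_iso {A B : C} (e : A ≅ B) : f A = f B := by
  rw [hf.eq_add_cokernel e.hom, hf.eq_zero_of_isZero (isZero_cokernel_of_epi e.hom), add_zero]

end IsAdditiveOnShortExact

end Additive

section Excess

variable {C : Type*} [Category C] (rk deg : C → ℤ) (μ : ℚ)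

def excessDeg (X : C) : ℚ :=
  deg X - μ * rk X

variable {rk deg μ}

lemma objSlope_eq_iff_excessDeg_eq_zero {X : C} (hX : 0 < rk X) :
    objSlope rk deg X = μ ↔ excessDeg rk deg μ X = 0 := by
  have hX' : (0 : ℚ) < rk X := by exact_mod_cast hX
  rw [objSlope, excessDeg, div_eq_iff hX'.ne', sub_eq_zero]

lemma objSlope_le_iff_excessDeg_nonpos {X : C} (hX : 0 < rk X) :
    objSlope rk deg X ≤ μ ↔ excessDeg rk deg μ X ≤ 0 := by
  have hX' : (0 : ℚ) < rk X := by exact_mod_cast hX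
  rw [objSlope, excessDeg, div_le_iff₀ hX', sub_nonpos]

variable [Abelian C]

lemma isAdditiveOnShortExact_excessDeg
    (hrk : ∀ S : ShortComplex C, S.ShortExact → rk S.X₂ = rk S.X₁ + rk S.X₃)
    (hdeg : ∀ S : ShortComplex C, S.ShortExact → deg S.X₂ = deg S.X₁ + deg S.X₃) :
    IsAdditiveOnShortExact (excessDeg rk deg μ) := by
  intro S hS
  simp only [excessDeg, hrk S hS, hdeg S hS]
  push_cast
  ring

variable (hd : IsAdditiveOnShortExact (excessDeg rk deg μ))
  (hrkpos : ∀ X : C, ¬ IsZero X → 0 < rk X)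
include hrkpos

lemma Semistable.excessDeg_eq_zero {V : C} (hV : Semistable rk deg μ V) :
    excessDeg rk deg μ V = 0 :=
  (objSlope_eq_iff_excessDeg_eq_zero (hrkpos V hV.1)).1 hV.2.1

lemma semistable_of_excessDeg {V : C} (hV : ¬ IsZero V) (hV0 : excessDeg rk deg μ V = 0)
    (hsub : ∀ (X : C) (i : X ⟶ V), Mono i → excessDeg rk deg μ X ≤ 0) :
    Semistable rk deg μ V :=
  ⟨hV, (objSlope_eq_iff_excessDeg_eq_zero (hrkpos V hV)).2 hV0,
    fun X i hi hX _ => (objSlope_le_iff_excessDeg_nonpos (hrkpos X hX)).2 (hsub X i hi)⟩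

include hd

lemma Semistable.excessDeg_nonpos_of_mono {V X : C} (hV : Semistable rk deg μ V)
    (i : X ⟶ V) [Mono i] : excessDeg rk deg μ X ≤ 0 := by
  by_cases hX : IsZero X
  · exact (hd.eq_zero_of_isZero hX).le
  by_cases hi : IsIso i
  · exact ((hd.congr_iso (asIso i)).trans (hV.excessDeg_eq_zero hrkpos)).le
  exact (objSlope_le_iff_excessDeg_nonpos (hrkpos X hX)).1 (hV.2.2 X i inferInstance hX hi)

lemma Semistable.excessDeg_nonneg_of_epi {V X : C} (hV : Semistable rk deg μ V)
    (p : V ⟶ X) [Epi p] : 0 ≤ excessDeg rk deg μ X := by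
  have hsum := hd.eq_kernel_add p
  rw [hV.excessDeg_eq_zero hrkpos] at hsum
  linarith [hV.excessDeg_nonpos_of_mono hd hrkpos (kernel.ι p)]

end Excess

theorem stmt1 {C : Type*} [Category C] [Abelian C] (rk deg : C → ℤ)
    (hrk : ∀ S : ShortComplex C, S.ShortExact → rk S.X₂ = rk S.X₁ + rk S.X₃)
    (hdeg : ∀ S : ShortComplex C, S.ShortExact → deg S.X₂ = deg S.X₁ + deg S.X₃)
    (hrkpos : ∀ X : C, ¬ IsZero X → 0 < rk X)
    (μ : ℚ) (F G : C) (φ : F ⟶ G)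
    (hF : Semistable rk deg μ F) (hG : Semistable rk deg μ G) :
    (IsZero (kernel φ) ∨ Semistable rk deg μ (kernel φ)) ∧
    (IsZero (cokernel φ) ∨ Semistable rk deg μ (cokernel φ)) := by
  have hd : IsAdditiveOnShortExact (excessDeg rk deg μ) :=
    isAdditiveOnShortExact_excessDeg hrk hdeg
  have hI : excessDeg rk deg μ (Abelian.image φ) = 0 :=
    le_antisymm (hG.excessDeg_nonpos_of_mono hd hrkpos (Abelian.image.ι φ)) <| by
      rw [← hd.congr_iso (Abelian.coimageIsoImage φ)]
      exact hF.excessDeg_nonneg_of_epi hd hrkpos (Abelian.coimage.π φ)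
  have hF0 := hF.excessDeg_eq_zero hrkpos
  have hG0 := hG.excessDeg_eq_zero hrkpos
  refine ⟨or_iff_not_imp_left.2 fun hK => ?_, or_iff_not_imp_left.2 fun hQ => ?_⟩
  · have hsum := hd.eq_add_cokernel (kernel.ι φ)
    rw [hd.congr_iso (Abelian.coimageIsoImage φ), hI, hF0] at hsum
    exact semistable_of_excessDeg hrkpos hK (by linarith)
      fun X i _ => hF.excessDeg_nonpos_of_mono hd hrkpos (i ≫ kernel.ι φ)
  · have hsum := hd.eq_kernel_add (cokernel.π φ)
    change _ = excessDeg rk deg μ (Abelian.image φ) + _ at hsum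
    rw [hI, hG0] at hsum
    refine semistable_of_excessDeg hrkpos hQ (by linarith) fun X i _ => ?_
    have hX := hd.eq_add_cokernel i
    linarith [hG.excessDeg_nonneg_of_epi hd hrkpos (cokernel.π φ ≫ cokernel.π i)]
end

section
/- Let A be an abelian category with additive functions rk, deg : Ob(A) → ℤ, rk positive on nonzero objects, and μ = deg/rk as before. Any nonzero morphism φ : F → G between stable objects of the same slope μ is an isomorphism, and every nonzero endomorphism of a stable object of slope μ is an automorphism. -/
open CategoryTheory CategoryTheory.Limits

/-- A nonzero object `V` is stable of objSlope `μ` if `μ(V) = μ` and every nonzero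
proper subobject `F ⊆ V` satisfies `μ(F) < μ`. -/
def Stable {C : Type*} [Category C] [Abelian C] (rk deg : C → ℤ) (μ : ℚ) (V : C) : Prop :=
  ¬ IsZero V ∧ objSlope rk deg V = μ ∧
    ∀ (F : C) (f : F ⟶ V), Mono f → ¬ IsZero F → ¬ IsIso f → objSlope rk deg F < μ

section Aux

open ZeroObject

variable {C : Type*} [Category C] [Abelian C]

lemma addfun_zero (r : C → ℤ)
    (hr : ∀ S : ShortComplex C, S.ShortExact → r S.X₂ = r S.X₁ + r S.X₃)
    {Z : C} (hZ : IsZero Z) : r Z = 0 := by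
  have h : (𝟙 Z) ≫ (𝟙 Z) = 0 := hZ.eq_of_src _ _
  let S : ShortComplex C := ShortComplex.mk (𝟙 Z) (𝟙 Z) h
  have hse : S.ShortExact := ShortComplex.ShortExact.mk' (S.exact_of_isZero_X₂ hZ) inferInstance inferInstance
  have := hr S hse
  simp only [S] at this
  omega

lemma addfun_iso (r : C → ℤ)
    (hr : ∀ S : ShortComplex C, S.ShortExact → r S.X₂ = r S.X₁ + r S.X₃)
    {X Y : C} (e : X ⟶ Y) (he : IsIso e) : r X = r Y := by
  have hZ : IsZero (0 : C) := isZero_zero C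
  have hepi : Epi (0 : Y ⟶ (0 : C)) := ⟨fun u v _ => hZ.eq_of_src u v⟩
  let S : ShortComplex C := ShortComplex.mk e (0 : Y ⟶ (0 : C)) (by simp)
  have hex : S.Exact := by
    rw [S.exact_iff_epi rfl]
    exact inferInstance
  have hse : S.ShortExact := ShortComplex.ShortExact.mk' hex inferInstance hepi
  have := hr S hse
  have h0 : r (0 : C) = 0 := addfun_zero r hr hZ
  simp only [S] at this
  omega

lemma slope_iso (rk deg : C → ℤ)
    (hrk : ∀ S : ShortComplex C, S.ShortExact → rk S.X₂ = rk S.X₁ + rk S.X₃)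
    (hdeg : ∀ S : ShortComplex C, S.ShortExact → deg S.X₂ = deg S.X₁ + deg S.X₃)
    {X Y : C} (e : X ⟶ Y) (he : IsIso e) : objSlope rk deg X = objSlope rk deg Y := by
  unfold objSlope
  rw [addfun_iso rk hrk e he, addfun_iso deg hdeg e he]

end Aux

lemma slope_avg (μ : ℚ) (a b d e : ℤ) (ha : 0 < a) (hb : 0 < b)
    (h1 : (d : ℚ) / a < μ) (h2 : (e : ℚ) / b ≤ μ) :
    ((d + e : ℤ) : ℚ) / ((a + b : ℤ) : ℚ) < μ := by
  have ha' : (0 : ℚ) < a := by exact_mod_cast ha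
  have hb' : (0 : ℚ) < b := by exact_mod_cast hb
  have h1' : (d : ℚ) < μ * a := by rwa [div_lt_iff₀ ha'] at h1
  have h2' : (e : ℚ) ≤ μ * b := by rwa [div_le_iff₀ hb'] at h2
  rw [div_lt_iff₀ (by push_cast; linarith)]
  push_cast
  nlinarith

theorem stmt14 {C : Type*} [Category C] [Abelian C] (rk deg : C → ℤ)
    (hrk : ∀ S : ShortComplex C, S.ShortExact → rk S.X₂ = rk S.X₁ + rk S.X₃)
    (hdeg : ∀ S : ShortComplex C, S.ShortExact → deg S.X₂ = deg S.X₁ + deg S.X₃)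
    (hrkpos : ∀ X : C, ¬ IsZero X → 0 < rk X) (μ : ℚ) :
    (∀ (F G : C) (φ : F ⟶ G), Stable rk deg μ F → Stable rk deg μ G →
      φ ≠ 0 → IsIso φ) ∧
    (∀ (V : C) (φ : V ⟶ V), Stable rk deg μ V → φ ≠ 0 → IsIso φ) := by
  have main : ∀ (F G : C) (φ : F ⟶ G), Stable rk deg μ F → Stable rk deg μ G →
      φ ≠ 0 → IsIso φ := by
    intro F G φ hF hG hφ
    obtain ⟨hFnz, hFμ, hFst⟩ := hF
    obtain ⟨hGnz, hGμ, hGst⟩ := hG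
    set I := Abelian.image φ with hI
    set p : F ⟶ I := Abelian.factorThruImage φ with hp
    set i : I ⟶ G := Abelian.image.ι φ with hi
    have hfac : p ≫ i = φ := Abelian.image.fac φ
    -- I is nonzero
    have hInz : ¬ IsZero I := by
      intro h
      exact hφ (by rw [← hfac, h.eq_of_src i 0, comp_zero])
    -- short exact sequence kernel p → F → I
    let S : ShortComplex C := ShortComplex.mk (kernel.ι p) p (kernel.condition p)
    have hse : S.ShortExact :=
      ShortComplex.ShortExact.mk' (S.exact_of_f_is_kernel (kernelIsKernel p))
        inferInstance inferInstance
    have hrkS := hrk S hse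
    have hdegS := hdeg S hse
    simp only [S] at hrkS hdegS
    by_cases hK : IsZero (kernel p)
    · -- p is mono, hence iso
      have hpmono : Mono p := Preadditive.mono_of_isZero_kernel _ hK
      have hpiso : IsIso p := isIso_of_mono_of_epi p
      by_cases hiiso : IsIso i
      · rw [← hfac]; exact inferInstance
      · -- contradiction: slope I < μ but I ≅ F with slope μ
        exfalso
        have h1 : objSlope rk deg I < μ := hGst I i inferInstance hInz hiiso
        have h2 : objSlope rk deg F = objSlope rk deg I :=
          slope_iso rk deg hrk hdeg p hpiso
        rw [hFμ] at h2
        linarith [h2 ▸ h1]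
    · -- kernel p nonzero: get contradiction
      exfalso
      have hknotiso : ¬ IsIso (kernel.ι p) := by
        intro h
        apply hφ
        have hp0 : p = 0 := by
          have := kernel.condition p
          rwa [← cancel_epi (kernel.ι p), comp_zero]
        rw [← hfac, hp0, zero_comp]
      have hKlt : objSlope rk deg (kernel p) < μ :=
        hFst (kernel p) (kernel.ι p) inferInstance hK hknotiso
      have hIle : objSlope rk deg I ≤ μ := by
        by_cases hiiso : IsIso i
        · rw [slope_iso rk deg hrk hdeg i hiiso, hGμ]
        · exact le_of_lt (hGst I i inferInstance hInz hiiso)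
      have hKpos : 0 < rk (kernel p) := hrkpos _ hK
      have hIpos : 0 < rk I := hrkpos _ hInz
      have hcontra : objSlope rk deg F < μ := by
        unfold objSlope at *
        rw [hrkS, hdegS]
        exact slope_avg μ _ _ _ _ hKpos hIpos hKlt hIle
      rw [hFμ] at hcontra
      exact lt_irrefl μ hcontra
  exact ⟨main, fun V φ hV => main V V φ hV hV⟩
end
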